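/- Let V be a finite-dimensional vector space over ZMod 2, let B be a symmetric bilinear form on V with B(x,x) = 0 for all x, let q be a ℤ/2-quadratic enhancement of B, and let e_1,…,e_g,f_1,…,f_g be a symplectic basis for B. Then Σ_{x ∈ V} (-1)^{(q x).val} = (-1)^{(Σ_{i=1}^{g} q(e_i)·q(f_i)).val} · 2^g, where the sum Σ_i q(e_i)q(f_i) is taken in ZMod 2. In particular, the normalized Gauss sum equals (-1)^{Arf(q)} with Arf(q) := Σ_i q(e_i)q(f_i). -/

import Mathlib

/-!
Write `V` in the symplectic coordinates `x = ∑ᵢ (aᵢ eᵢ + cᵢ fᵢ)`. The hyperbolic planes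
`⟨eᵢ, fᵢ⟩` are pairwise orthogonal, so `q x = ∑ᵢ (aᵢ q(eᵢ) + cᵢ q(fᵢ) + aᵢ cᵢ)`, and since
`a ↦ (-1)^a` is a character of `ZMod 2` the Gauss sum factors as a product over the planes.
On a single plane, a four-term check gives `∑_{a,c} (-1)^(a α + c β + a c) = 2 (-1)^(α β)`.
-/

open Finset

theorem neg_one_pow_val_add {R : Type*} [Ring R] (a b : ZMod 2) :
    (-1 : R) ^ (a + b).val = (-1) ^ a.val * (-1) ^ b.val := by
  rw [ZMod.val_add, ← neg_one_pow_eq_pow_mod_two, pow_add]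

theorem neg_one_pow_val_sum {R : Type*} [CommRing R] {ι : Type*} (s : Finset ι)
    (f : ι → ZMod 2) : (-1 : R) ^ (∑ i ∈ s, f i).val = ∏ i ∈ s, (-1) ^ (f i).val := by
  classical
  induction s using Finset.induction_on with
  | empty => simp
  | insert a s ha ih => rw [sum_insert ha, prod_insert ha, neg_one_pow_val_add, ih]

theorem sum_neg_one_pow_val_hyperbolic {R : Type*} [Ring R] (α β : ZMod 2) :
    ∑ y : ZMod 2 × ZMod 2, (-1 : R) ^ (y.1 * α + y.2 * β + y.1 * y.2).val =
      2 * (-1) ^ (α * β).val := by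
  have huniv : (univ : Finset (ZMod 2)) = {0, 1} := rfl
  have htwo : (1 + 1 : ZMod 2) = 0 := rfl
  rw [Fintype.sum_prod_type]
  obtain rfl | rfl : α = 0 ∨ α = 1 := by decide +revert
  all_goals obtain rfl | rfl : β = 0 ∨ β = 1 := by decide +revert
  all_goals simp [huniv, htwo, ZMod.val_one, ← neg_add, one_add_one_eq_two]

theorem sum_neg_one_pow_val_sum_hyperbolic {R ι : Type*} [CommRing R] [Fintype ι]
    [DecidableEq ι] (α β : ι → ZMod 2) :
    ∑ p : ι → ZMod 2 × ZMod 2,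
        (-1 : R) ^ (∑ i, ((p i).1 * α i + (p i).2 * β i + (p i).1 * (p i).2)).val =
      (-1) ^ (∑ i, α i * β i).val * 2 ^ Fintype.card ι := by
  simp_rw [neg_one_pow_val_sum]
  rw [← Fintype.prod_sum fun i (y : ZMod 2 × ZMod 2) =>
    (-1 : R) ^ (y.1 * α i + y.2 * β i + y.1 * y.2).val]
  simp_rw [sum_neg_one_pow_val_hyperbolic]
  rw [prod_mul_distrib, prod_const, card_univ, mul_comm]

def IsQuadraticEnhancement {R M : Type*} [CommRing R] [AddCommGroup M] [Module R M]
    (B : LinearMap.BilinForm R M) (q : M → R) : Prop :=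
  ∀ x y, q (x + y) = q x + q y + B x y

namespace IsQuadraticEnhancement

section CommRing

variable {R M : Type*} [CommRing R] [AddCommGroup M] [Module R M]
  {B : LinearMap.BilinForm R M} {q : M → R}

theorem map_zero (hq : IsQuadraticEnhancement B q) : q 0 = 0 := by
  simpa using hq 0 0

theorem map_sum_of_pairwise {ι : Type*} (hq : IsQuadraticEnhancement B q) (s : Finset ι)
    {v : ι → M} (hv : (s : Set ι).Pairwise fun i j => B (v i) (v j) = 0) :
    q (∑ i ∈ s, v i) = ∑ i ∈ s, q (v i) := by
  classical
  induction s using Finset.induction_on with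
  | empty => simp [hq.map_zero]
  | insert a s ha ih =>
    have horth : B (v a) (∑ i ∈ s, v i) = 0 := by
      rw [map_sum]
      exact sum_eq_zero fun j hj =>
        hv (by simp) (by simp [hj]) fun h => ha (h ▸ hj)
    rw [sum_insert ha, sum_insert ha, hq, horth, add_zero,
      ih (hv.mono (by simp))]

end CommRing

section ZModTwo

variable {M : Type*} [AddCommGroup M] [Module (ZMod 2) M]
  {B : LinearMap.BilinForm (ZMod 2) M} {q : M → ZMod 2}

theorem map_smul (hq : IsQuadraticEnhancement B q) (a : ZMod 2) (x : M) :
    q (a • x) = a * q x := by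
  obtain rfl | rfl : a = 0 ∨ a = 1 := by decide +revert
  · simp [hq.map_zero]
  · simp

theorem map_smul_add_smul (hq : IsQuadraticEnhancement B q) (a c : ZMod 2) (x y : M) :
    q (a • x + c • y) = a * q x + c * q y + a * c * B x y := by
  rw [hq, hq.map_smul, hq.map_smul, _root_.map_smul, _root_.map_smul]
  simp only [LinearMap.smul_apply, smul_eq_mul]
  ring

theorem map_sum_symplectic {ι : Type*} [Fintype ι] [DecidableEq ι]
    (hq : IsQuadraticEnhancement B q) (hsymm : ∀ x y, B x y = B y x) {e f : ι → M}
    (hee : ∀ i j, B (e i) (e j) = 0) (hff : ∀ i j, B (f i) (f j) = 0)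
    (hef : ∀ i j, B (e i) (f j) = if i = j then 1 else 0) (p : ι → ZMod 2 × ZMod 2) :
    q (∑ i, ((p i).1 • e i + (p i).2 • f i)) =
      ∑ i, ((p i).1 * q (e i) + (p i).2 * q (f i) + (p i).1 * (p i).2) := by
  have horth : (Set.univ : Set ι).Pairwise fun i j =>
      B ((p i).1 • e i + (p i).2 • f i) ((p j).1 • e j + (p j).2 • f j) = 0 := by
    intro i _ j _ hij
    simp only [map_add, _root_.map_smul, LinearMap.add_apply, LinearMap.smul_apply, smul_eq_mul]
    rw [hee, hff, hef, hsymm (f i), hef, if_neg hij, if_neg (Ne.symm hij)]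
    ring
  rw [hq.map_sum_of_pairwise univ (by simpa using horth)]
  refine sum_congr rfl fun i _ => ?_
  rw [hq.map_smul_add_smul, hef, if_pos rfl, mul_one]

end ZModTwo

end IsQuadraticEnhancement

theorem Module.Basis.sum_univ_eq_sum_pairs {R M ι β : Type*} [Semiring R] [Fintype R]
    [AddCommMonoid M] [Module R M] [Fintype M] [Fintype ι] [DecidableEq ι] [AddCommMonoid β]
    (b : Module.Basis (ι ⊕ ι) R M) (φ : M → β) :
    ∑ x, φ x = ∑ p : ι → R × R, φ (∑ i, ((p i).1 • b (.inl i) + (p i).2 • b (.inr i))) := by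
  let coords : (ι → R × R) ≃ M :=
    ((Equiv.arrowProdEquivProdArrow _ _ _).trans (Equiv.sumArrowEquivProdArrow _ _ _).symm).trans
      b.equivFun.symm.toEquiv
  refine (Fintype.sum_equiv coords _ _ fun p => ?_).symm
  simp [coords, Fintype.sum_sum_type, sum_add_distrib]

theorem arf_invariant_gauss_sum_general
    (V : Type*) [AddCommGroup V] [Module (ZMod 2) V]
    [Fintype V]
    (B : LinearMap.BilinForm (ZMod 2) V)
    (hsymm : ∀ x y : V, B x y = B y x)
    (q : V → ZMod 2)
    (hq : ∀ x y : V, q (x + y) = q x + q y + B x y)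
    (g : ℕ) (b : Module.Basis (Fin g ⊕ Fin g) (ZMod 2) V)
    (hee : ∀ i j : Fin g, B (b (Sum.inl i)) (b (Sum.inl j)) = 0)
    (hff : ∀ i j : Fin g, B (b (Sum.inr i)) (b (Sum.inr j)) = 0)
    (hef : ∀ i j : Fin g, B (b (Sum.inl i)) (b (Sum.inr j)) = if i = j then 1 else 0) :
    ∑ x : V, (-1 : ℂ) ^ (q x).val =
      (-1 : ℂ) ^ (∑ i : Fin g, q (b (Sum.inl i)) * q (b (Sum.inr i))).val * 2 ^ g := by
  have hq : IsQuadraticEnhancement B q := hq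
  rw [b.sum_univ_eq_sum_pairs]
  simp_rw [hq.map_sum_symplectic hsymm hee hff hef]
  rw [sum_neg_one_pow_val_sum_hyperbolic, Fintype.card_fin]

/-- The Gauss sum of a `ℤ/2`-quadratic enhancement `q` of an alternating symmetric bilinear
form on a `ZMod 2`-vector space with symplectic basis `e₁,…,e_g,f₁,…,f_g` equals
`(-1)^{Arf(q)} · 2^g`, where `Arf(q) = Σᵢ q(eᵢ)·q(fᵢ)`. -/
theorem arf_invariant_gauss_sum
    (V : Type*) [AddCommGroup V] [Module (ZMod 2) V] [FiniteDimensional (ZMod 2) V]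
    [Fintype V]
    (B : LinearMap.BilinForm (ZMod 2) V)
    (hsymm : ∀ x y : V, B x y = B y x)
    (halt : ∀ x : V, B x x = 0)
    (q : V → ZMod 2)
    (hq : ∀ x y : V, q (x + y) = q x + q y + B x y)
    (g : ℕ) (b : Module.Basis (Fin g ⊕ Fin g) (ZMod 2) V)
    (hee : ∀ i j : Fin g, B (b (Sum.inl i)) (b (Sum.inl j)) = 0)
    (hff : ∀ i j : Fin g, B (b (Sum.inr i)) (b (Sum.inr j)) = 0)
    (hef : ∀ i j : Fin g, B (b (Sum.inl i)) (b (Sum.inr j)) = if i = j then 1 else 0) :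
    ∑ x : V, (-1 : ℂ) ^ (q x).val =
      (-1 : ℂ) ^ (∑ i : Fin g, q (b (Sum.inl i)) * q (b (Sum.inr i))).val * 2 ^ g :=
  arf_invariant_gauss_sum_general V B hsymm q hq g b hee hff hef
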